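/- Let X be a finite family of sets of runs of an n-CPS described by a well-formed grammar, and let X, Y ∈ X. Then: (1) the family X ∪ {X ∪ Y} is described by a well-formed grammar in which lev(X ∪ Y) = max(lev(X), lev(Y)); and (2) there is a finite family Y ⊇ X ∪ {X∘Y} described by a well-formed grammar in which lev(X∘Y) = max(lev(X), lev(Y)), where X∘Y := {R∘S : R ∈ X, S ∈ Y}. -/

import Mathlib

namespace CPDS

/-- Tower of exponentials: `expTower 0 i = i`, `expTower (k+1) i = 2^(expTower k i)`. -/
def expTower : ℕ → ℕ → ℕ
  | 0, i => i
  | k+1, i => 2 ^ expTower k i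

/-- Raw higher-order stacks over a stack alphabet `Γ`.
A `0`-stack is `atom γ k t` (symbol `γ` with a link of level `k` storing the stack `t`);
a `(k+1)`-stack is a list of `k`-stacks (topmost first). -/
inductive RawSt (Γ : Type) : Type where
  | atom (γ : Γ) (k : ℕ) (t : RawSt Γ) : RawSt Γ
  | seq (l : List (RawSt Γ)) : RawSt Γ

variable {Γ Q A : Type}

/-- The topmost stack `d` levels down (topmost `(lvl-d)`-stack of an `lvl`-stack). -/
def topAt : RawSt Γ → ℕ → Option (RawSt Γ)
  | s, 0 => some s
  | .seq (h :: _), d+1 => topAt h d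
  | .seq [], _+1 => none
  | .atom _ _ _, _+1 => none

/-- Modify the topmost stack `d` levels down. -/
def modAt : RawSt Γ → ℕ → (RawSt Γ → Option (RawSt Γ)) → Option (RawSt Γ)
  | s, 0, f => f s
  | .seq (h :: t), d+1, f => (modAt h d f).map (fun h' => RawSt.seq (h' :: t))
  | .seq [], _+1, _ => none
  | .atom _ _ _, _+1, _ => none

/-- Stack operations of a level-`n` collapsible pushdown system. -/
inductive Op (Γ : Type) where
  | pop (i : ℕ)
  | push (i : ℕ)
  | push1 (γ : Γ) (k : ℕ)
  | col (i : ℕ)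

/-- The level of a stack operation. -/
def Op.level : Op Γ → ℕ
  | .pop i => i
  | .push i => i
  | .push1 _ _ => 1
  | .col i => i

/-- Applying a stack operation to an `n`-stack (partial). -/
def applyOp (n : ℕ) : Op Γ → RawSt Γ → Option (RawSt Γ)
  | .pop i, s =>
      if 1 ≤ i ∧ i ≤ n then
        modAt s (n - i) (fun u =>
          match u with
          | .seq (_ :: r :: rest) => some (.seq (r :: rest))
          | _ => none)
      else none
  | .push i, s =>
      if 2 ≤ i ∧ i ≤ n then
        modAt s (n - i) (fun u =>
          match u with
          | .seq (h :: t) => some (.seq (h :: h :: t))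
          | _ => none)
      else none
  | .push1 γ k, s =>
      if 1 ≤ k ∧ k ≤ n then
        match topAt s (n - k) with
        | some (.seq (_ :: rest)) =>
            modAt s (n - 1) (fun u =>
              match u with
              | .seq l => some (.seq (.atom γ k (.seq rest) :: l))
              | _ => none)
        | _ => none
      else none
  | .col i, s =>
      if 1 ≤ i ∧ i ≤ n then
        match topAt s n with
        | some (.atom _ k t) =>
            if k = i then
              match t with
              | .seq (_ :: _) => modAt s (n - i) (fun _ => some t)
              | _ => none
            else none
        | _ => none
      else none

/-- The initial `k`-stack (with `⊥ = bot` and links of level `n` to the empty stack). -/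
def botSt (bot : Γ) (n : ℕ) : ℕ → RawSt Γ
  | 0 => .atom bot n (.seq [])
  | k+1 => .seq [botSt bot n k]

/-- A pushdown store: an `n`-stack obtainable from the initial `n`-stack by stack operations. -/
def IsPds (n : ℕ) (bot : Γ) (s : RawSt Γ) : Prop :=
  ∃ ops : List (Op Γ),
    ops.foldl (fun acc op => acc.bind (applyOp n op)) (some (botSt bot n n)) = some s

/-- The topmost stack symbol of an `n`-stack. -/
def topSym (n : ℕ) (s : RawSt Γ) : Option Γ :=
  match topAt s n with
  | some (.atom γ _ _) => some γ
  | _ => none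

/-- A transition of a collapsible pushdown system; `lab = none` denotes `ε`. -/
structure Trans (Γ Q A : Type) where
  src : Q
  sym : Γ
  lab : Option A
  tgt : Q
  op : Op Γ

/-- A collapsible pushdown system of level `n`. -/
structure CPS (Γ Q A : Type) (n : ℕ) where
  bot : Γ
  qI : Q
  Δ : Set (Trans Γ Q A)

/-- One step from configuration `c` to `d` using transition `t`. -/
def StepAt (n : ℕ) (t : Trans Γ Q A) (c d : Q × RawSt Γ) : Prop :=
  c.1 = t.src ∧ topSym n c.2 = some t.sym ∧ d.1 = t.tgt ∧ applyOp n t.op c.2 = some d.2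

/-- Validity of a list of steps starting from configuration `c`. -/
def RunOk (n : ℕ) (S : CPS Γ Q A n) : (Q × RawSt Γ) → List (Trans Γ Q A × (Q × RawSt Γ)) → Prop
  | _, [] => True
  | c, (t, d) :: rest => t ∈ S.Δ ∧ StepAt n t c d ∧ RunOk n S d rest

/-- A run of a collapsible pushdown system. -/
structure Run (n : ℕ) (S : CPS Γ Q A n) : Type where
  start : Q × RawSt Γ
  startPds : IsPds n S.bot start.2
  steps : List (Trans Γ Q A × (Q × RawSt Γ))
  ok : RunOk n S start steps

/-- Length of a run. -/
def Run.len {n : ℕ} {S : CPS Γ Q A n} (R : Run n S) : ℕ := R.steps.length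

/-- The `i`-th configuration of a run. -/
def Run.conf {n : ℕ} {S : CPS Γ Q A n} (R : Run n S) (i : ℕ) : Q × RawSt Γ :=
  (R.start :: R.steps.map Prod.snd).getD i R.start

/-- The transition used at step `i` of a run. -/
def Run.tr? {n : ℕ} {S : CPS Γ Q A n} (R : Run n S) (i : ℕ) : Option (Trans Γ Q A) :=
  (R.steps[i]?).map Prod.fst

/-- The stack operation performed at step `i` of a run. -/
def Run.op? {n : ℕ} {S : CPS Γ Q A n} (R : Run n S) (i : ℕ) : Option (Op Γ) :=
  (R.tr? i).map Trans.op

/-! ### Positions in stacks -/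

/-- A position: a simple position `head` (a tuple of coordinates, topmost level first)
followed by a chain of links `(k, y)` (a link of level `k` together with a simple
position `y` in the linked stack). -/
structure Pos where
  head : List ℕ
  tail : List (ℕ × List ℕ)
deriving DecidableEq

/-- The sizes of the topmost `i`-stacks of an `m`-stack (levels `m, m-1, …, 1`). -/
def sizes : ℕ → RawSt Γ → List ℕ
  | 0, _ => []
  | m+1, .seq (h :: t) => (t.length + 1) :: sizes m h
  | m+1, .seq [] => 0 :: List.replicate m 0
  | m+1, .atom _ _ _ => List.replicate (m+1) 0

/-- `TOP^k(s)`: the position of the topmost `k`-stack of an `n`-stack `s`. -/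
def topPos (n : ℕ) (s : RawSt Γ) (k : ℕ) : Pos :=
  ⟨(sizes n s).take (n - k) ++ List.replicate k 0, []⟩

/-- The position of the second topmost `(k-1)`-stack in the topmost `k`-stack of `s`. -/
def secondTopPos (n : ℕ) (s : RawSt Γ) (k : ℕ) : Pos :=
  ⟨(sizes n s).take (n - k) ++ ((sizes n s).getD (n - k) 0 - 1) :: List.replicate (k - 1) 0, []⟩

/-- The stack located at a simple position (following nonzero coordinates; the
remaining coordinates must be zero). -/
def stackAtAux : RawSt Γ → List ℕ → Option (RawSt Γ)
  | s, [] => some s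
  | s, 0 :: rest => if rest.all (· == 0) then some s else none
  | .seq l, (i+1) :: rest =>
      match l[l.length - (i+1)]? with
      | some t => stackAtAux t rest
      | none => none
  | .atom _ _ _, (_+1) :: _ => none

/-- The stack located at a (possibly linked) position. -/
def posStackAux : RawSt Γ → List ℕ → List (ℕ × List ℕ) → Option (RawSt Γ)
  | s, h, [] => stackAtAux s h
  | s, h, (k, y) :: rest =>
      match stackAtAux s h with
      | some (.atom _ k' t) =>
          if k' = k ∧ y.length = k ∧ y ≠ List.replicate k 0 then posStackAux t y rest else none
      | _ => none

/-- `x` is a (valid) position in the `n`-stack `s`. -/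
def PosValid (n : ℕ) (s : RawSt Γ) (x : Pos) : Prop :=
  x.head.length = n ∧ (posStackAux s x.head x.tail).isSome

/-- Remove trailing zeros. -/
def stripZ (l : List ℕ) : List ℕ := (l.reverse.dropWhile (· == 0)).reverse

/-- The number of trailing zeros of a simple position (the level of the stack it points to). -/
def trailingZeros (l : List ℕ) : ℕ := (l.reverse.takeWhile (· == 0)).length

/-- The components (simple positions) of a position. -/
def comps (x : Pos) : List (List ℕ) := x.head :: x.tail.map Prod.snd

/-- The last component of a position. -/
def lastComp (x : Pos) : List ℕ := (x.tail.map Prod.snd).getLastD x.head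

/-- `PointsInto y x`: the position `y` points into the stack at the position `x`. -/
def PointsInto (y x : Pos) : Prop :=
  y ≠ x ∧
  (y.tail.map Prod.fst).take x.tail.length = x.tail.map Prod.fst ∧
  (comps y).take x.tail.length = (comps x).take x.tail.length ∧
  ∃ c, (comps y)[x.tail.length]? = some c ∧ stripZ (lastComp x) <+: c

/-- One packing step: replace the last `k` coordinates by `y`. -/
def packStep (acc : List ℕ) (p : ℕ × List ℕ) : List ℕ := acc.take (acc.length - p.1) ++ p.2

/-- The list `[pack_0(x), pack_1(x), …, pack_m(x)]`. -/
def packs (x : Pos) : List (List ℕ) := x.tail.scanl packStep x.head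

/-- `pack_{NestingRank(x)}(x)`. -/
def packFull (x : Pos) : List ℕ := x.tail.foldl packStep x.head

/-- Lexicographic (non-strict) order on simple positions. -/
def lexLe (a b : List ℕ) : Prop := a = b ∨ List.Lex (· < ·) a b

/-- `a ≺_k b`: `a` is lexicographically smaller than `b`, the first difference
being the level-`k` coordinate (in an `n`-stack). -/
def ltAt (n k : ℕ) (a b : List ℕ) : Prop :=
  a.take (n - k) = b.take (n - k) ∧ a.getD (n - k) 0 < b.getD (n - k) 0

/-! ### The history function -/

/-- History of a position across one step: `op` transforms the stack `s` into `t`;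
a position of `t` is traced back to a position of `s`. -/
def histStep (n : ℕ) (op : Op Γ) (s t : RawSt Γ) (x : Pos) : Pos :=
  match op with
  | .push1 _ _ =>
      if x.head = sizes n t then
        match x.tail with
        | [] => ⟨(x.head.take (n - 1)) ++ [x.head.getD (n - 1) 0 - 1], []⟩
        | (k', y1) :: rest => ⟨x.head.take (n - k') ++ y1, rest⟩
      else x
  | .push i =>
      if x.head.take (n - i + 1) = (sizes n t).take (n - i + 1) then
        ⟨x.head.take (n - i) ++ (x.head.getD (n - i) 0 - 1) :: x.head.drop (n - i + 1), x.tail⟩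
      else x
  | .col k =>
      if x.head.take (n - k) = (sizes n t).take (n - k) ∧
          ¬(x.tail = [] ∧ x.head.drop (n - k) = List.replicate k 0) then
        ⟨sizes n s, (k, x.head.drop (n - k)) :: x.tail⟩
      else x
  | .pop _ => x

/-- For each step of a run: its operation together with the source and target stacks. -/
def tripsAux : (Q × RawSt Γ) → List (Trans Γ Q A × (Q × RawSt Γ)) →
    List (Op Γ × RawSt Γ × RawSt Γ)
  | _, [] => []
  | c, (t, d) :: rest => (t.op, c.2, d.2) :: tripsAux d rest

def Run.trips {n : ℕ} {S : CPS Γ Q A n} (R : Run n S) : List (Op Γ × RawSt Γ × RawSt Γ) :=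
  tripsAux R.start R.steps

/-- `R.hist i j x`: the history of the position `x` (of the stack of `R(j)`)
along the subrun `R[i,j]`, yielding a position of the stack of `R(i)`. -/
def Run.hist {n : ℕ} {S : CPS Γ Q A n} (R : Run n S) (i j : ℕ) (x : Pos) : Pos :=
  ((R.trips.drop i).take (j - i)).foldr (fun tr acc => histStep n tr.1 tr.2.1 tr.2.2 acc) x

/-! ### Returns, colreturns, pumping runs, non-erasing runs -/

/-- The subrun `R[i,j]` is a `k`-return. -/
def RetSeg {n : ℕ} {S : CPS Γ Q A n} (R : Run n S) (i j k : ℕ) : Prop :=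
  2 ≤ (sizes n (R.conf i).2).getD (n - k) 0 ∧
  R.hist i j (topPos n (R.conf j).2 (k - 1)) = secondTopPos n (R.conf i).2 k ∧
  ∀ m, i + 1 ≤ m → m + 1 ≤ j →
    R.hist m j (topPos n (R.conf j).2 (k - 1)) ≠ topPos n (R.conf m).2 (k - 1)

/-- The subrun `R[i,j]` is a `k`-colreturn. -/
def ColSeg {n : ℕ} {S : CPS Γ Q A n} (R : Run n S) (i j k : ℕ) : Prop :=
  (∃ x : List ℕ,
    R.hist i j (topPos n (R.conf j).2 (k - 1)) = ⟨sizes n (R.conf i).2, [(k, x)]⟩) ∧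
  ∀ m, i ≤ m → m + 1 ≤ j → (R.hist m j (topPos n (R.conf j).2 (k - 1))).tail ≠ []

/-- The subrun `R[i,j]` is a pumping run. -/
def PumpSeg {n : ℕ} {S : CPS Γ Q A n} (R : Run n S) (i j : ℕ) : Prop :=
  R.hist i j (topPos n (R.conf j).2 0) = topPos n (R.conf i).2 0

/-- The subrun `R[i,j]` is `TOP^k`-non-erasing. -/
def NESeg {n : ℕ} {S : CPS Γ Q A n} (R : Run n S) (i j k : ℕ) : Prop :=
  ∀ m, i ≤ m → m ≤ j → PosValid n (R.conf m).2 (topPos n (R.conf i).2 k)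

/-- The change level of the subrun `R[i,j]`: the maximal level `lv` such that the
topmost `lv`-stacks of `R(i)` and `R(j)` have different sizes. -/
def changeLevSeg {n : ℕ} {S : CPS Γ Q A n} (R : Run n S) (i j : ℕ) : ℕ :=
  (Finset.range (n + 1)).sup fun lv =>
    if (sizes n (R.conf i).2).getD (n - lv) 0 ≠ (sizes n (R.conf j).2).getD (n - lv) 0 then lv
    else 0

/-- `op` is a push of level `j` (for `j = 1`: any `push¹_{a,l}`). -/
def IsPushOfLevel (op : Op Γ) (j : ℕ) : Prop :=
  (2 ≤ j ∧ op = Op.push j) ∨ (j = 1 ∧ ∃ a l, op = Op.push1 a l)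

/-! ### Graphs: reachability and the ε-contraction -/

/-- The initial configuration. -/
def initConfig (n : ℕ) (S : CPS Γ Q A n) : Q × RawSt Γ := (S.qI, botSt S.bot n n)

/-- Reachability from the initial configuration. -/
def Reachable (n : ℕ) (S : CPS Γ Q A n) (c : Q × RawSt Γ) : Prop :=
  ∃ R : Run n S, R.start = initConfig n S ∧ R.conf R.len = c

/-- An `a`-labelled edge of the ε-contraction: a run consisting of ε-steps followed
by one `a`-labelled step. -/
def EpsEdge (n : ℕ) (S : CPS Γ Q A n) (a : A) (c d : Q × RawSt Γ) : Prop :=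
  ∃ R : Run n S, R.start = c ∧ R.conf R.len = d ∧ 1 ≤ R.len ∧
    (∀ i, i + 1 < R.len → ∃ t, R.tr? i = some t ∧ t.lab = none) ∧
    (∃ t, R.tr? (R.len - 1) = some t ∧ t.lab = some a)

/-- A node of the ε-contraction: a reachable configuration that is the target of a
non-ε-labelled transition from a reachable configuration. -/
def GNode (n : ℕ) (S : CPS Γ Q A n) (c : Q × RawSt Γ) : Prop :=
  Reachable n S c ∧ ∃ d t a, Reachable n S d ∧ t ∈ S.Δ ∧ t.lab = some a ∧ StepAt n t d c

/-! ### Grammars of runs -/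

/-- A (context-free) rule over a family of sets of runs indexed by `I`,
with transitions as terminals. -/
inductive Rule (I Γ Q A : Type) where
  | nil (X : I)
  | one (X : I) (δ : Trans Γ Q A)
  | two (X : I) (δ : Trans Γ Q A) (Y : I)
  | three (X : I) (δ : Trans Γ Q A) (Y Z : I)

/-- The left-hand side of a rule. -/
def Rule.lhs {I : Type} : Rule I Γ Q A → I
  | .nil X => X
  | .one X _ => X
  | .two X _ _ => X
  | .three X _ _ _ => X

/-- Constraint on pop/collapse levels of an operation. -/
def opOK (op : Op Γ) (l : ℕ) : Prop :=
  ∀ k, (op = Op.pop k ∨ op = Op.col k) → k ≤ l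

/-- Well-formed rules. -/
def WfRule {I : Type} (n : ℕ) (S : CPS Γ Q A n) (Xs : I → Set (Run n S)) (lev : I → ℕ) :
    Rule I Γ Q A → Prop
  | .nil _ => True
  | .one X δ => δ ∈ S.Δ ∧ opOK δ.op (lev X)
  | .two X δ Y => δ ∈ S.Δ ∧ lev Y ≤ lev X ∧ opOK δ.op (lev Y)
  | .three X δ Y Z => δ ∈ S.Δ ∧ lev Z ≤ lev X ∧ opOK δ.op (lev Y) ∧
      ∀ R : Run n S, (∃ T ∈ Xs Y, R.steps = (δ, T.start) :: T.steps) →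
        topAt (R.conf 0).2 (n - lev Y) = topAt (R.conf R.len).2 (n - lev Y)

/-- A run `R` is described by a rule. -/
def DescribedBy {I : Type} {n : ℕ} {S : CPS Γ Q A n} (Xs : I → Set (Run n S))
    (R : Run n S) : Rule I Γ Q A → Prop
  | .nil _ => R.steps = []
  | .one _ δ => ∃ d, R.steps = [(δ, d)]
  | .two _ δ Y => ∃ T ∈ Xs Y, R.steps = (δ, T.start) :: T.steps
  | .three _ δ Y Z =>
      ∃ T ∈ Xs Y, ∃ U ∈ Xs Z, U.start = T.conf T.len ∧
        R.steps = (δ, T.start) :: (T.steps ++ U.steps)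

/-- The family `Xs` (with levels `lev`) is described by the well-formed grammar `rules`. -/
def Describes {I : Type} (n : ℕ) (S : CPS Γ Q A n) (rules : Set (Rule I Γ Q A))
    (Xs : I → Set (Run n S)) (lev : I → ℕ) : Prop :=
  (∀ r ∈ rules, WfRule n S Xs lev r) ∧
  ∀ (i : I) (R : Run n S), R ∈ Xs i ↔ ∃ r ∈ rules, r.lhs = i ∧ DescribedBy Xs R r

/-- Composition of two sets of runs. -/
def compSet {n : ℕ} {S : CPS Γ Q A n} (XX YY : Set (Run n S)) : Set (Run n S) :=
  {R | ∃ T ∈ XX, ∃ U ∈ YY, U.start = T.conf T.len ∧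
        R.start = T.start ∧ R.steps = T.steps ++ U.steps}

/-! Runs compose like the morphisms of a category: `compSet` is associative, the runs of
length `0` are a unit, and prefixing a step commutes with composition on the right. Reading a
rule `X → δ Y Z` as the set `δ · (Y ∘ Z)` of runs, `X ∘ V` is obtained rule by rule, since
`(δ · (Y ∘ Z)) ∘ V = δ · (Y ∘ (Z ∘ V))`: the new nonterminal `X ∘ V` gets the rules
`δ Y (Z ∘ V)`, `δ (Y' ∘ V)` and `δ V` for the rules `X → δ Y Z`, `X → δ Y'`, `X → δ`, and the
rules of `V` if `X → ε`. Only levels of left-hand sides grow and `Y` is kept, so the rules stay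
well-formed. For a union, the new nonterminal takes over the rules of both sides. -/

section Runs

variable {n : ℕ} {S : CPS Γ Q A n}

def endConf (c : Q × RawSt Γ) (l : List (Trans Γ Q A × (Q × RawSt Γ))) : Q × RawSt Γ :=
  (l.map Prod.snd).getLastD c

@[simp]
theorem endConf_nil (c : Q × RawSt Γ) :
    endConf c ([] : List (Trans Γ Q A × (Q × RawSt Γ))) = c :=
  rfl

@[simp]
theorem endConf_cons (c : Q × RawSt Γ) (t : Trans Γ Q A) (d : Q × RawSt Γ)
    (l : List (Trans Γ Q A × (Q × RawSt Γ))) : endConf c ((t, d) :: l) = endConf d l := by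
  simp only [endConf, List.map_cons, List.getLastD_cons]

theorem endConf_append (c : Q × RawSt Γ) (l₁ l₂ : List (Trans Γ Q A × (Q × RawSt Γ))) :
    endConf c (l₁ ++ l₂) = endConf (endConf c l₁) l₂ := by
  induction l₁ generalizing c with
  | nil => rfl
  | cons h t ih => rw [List.cons_append, ← h.eta, endConf_cons, endConf_cons, ih]

theorem Run.conf_len (R : Run n S) : R.conf R.len = endConf R.start R.steps := by
  suffices ∀ (c d : Q × RawSt Γ) (m : List (Q × RawSt Γ)),
      (c :: m).getD m.length d = m.getLastD c by
    simpa [Run.conf, Run.len, endConf] using this R.start R.start (R.steps.map Prod.snd)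
  intro c d m
  induction m generalizing c with
  | nil => rfl
  | cons h t ih => rw [List.getLastD_cons]; simpa using ih h

theorem runOk_append {c : Q × RawSt Γ} {l₁ l₂ : List (Trans Γ Q A × (Q × RawSt Γ))}
    (h₁ : RunOk n S c l₁) (h₂ : RunOk n S (endConf c l₁) l₂) :
    RunOk n S c (l₁ ++ l₂) := by
  induction l₁ generalizing c with
  | nil => exact h₂
  | cons h t ih =>
    rw [← h.eta, endConf_cons] at h₂
    exact ⟨h₁.1, h₁.2.1, ih h₁.2.2 h₂⟩

theorem Run.ext {R T : Run n S} (h₁ : R.start = T.start) (h₂ : R.steps = T.steps) :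
    R = T := by
  cases R; cases T; cases h₁; cases h₂; rfl

theorem IsPds.applyOp {bot : Γ} {op : Op Γ} {s t : RawSt Γ} (hs : IsPds n bot s)
    (h : applyOp n op s = some t) : IsPds n bot t := by
  obtain ⟨ops, hops⟩ := hs
  exact ⟨ops ++ [op], by simp [List.foldl_append, hops, h]⟩

theorem Run.step_of_steps_eq_cons (R : Run n S) {δ : Trans Γ Q A} {d : Q × RawSt Γ}
    {l : List (Trans Γ Q A × (Q × RawSt Γ))} (h : R.steps = (δ, d) :: l) :
    δ ∈ S.Δ ∧ StepAt n δ R.start d := by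
  have hok := R.ok
  rw [h] at hok
  exact ⟨hok.1, hok.2.1⟩

def Run.append (T U : Run n S) (h : U.start = T.conf T.len) : Run n S :=
  ⟨T.start, T.startPds, T.steps ++ U.steps, runOk_append T.ok (T.conf_len ▸ h ▸ U.ok)⟩

theorem Run.append_mem_compSet {XX YY : Set (Run n S)} {T U : Run n S} (hT : T ∈ XX)
    (hU : U ∈ YY) (h : U.start = T.conf T.len) : T.append U h ∈ compSet XX YY :=
  ⟨T, hT, U, hU, h, rfl, rfl⟩

def nilRuns : Set (Run n S) := {R | R.steps = []}

def stepThen (δ : Trans Γ Q A) (W : Set (Run n S)) : Set (Run n S) :=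
  {R | ∃ T ∈ W, R.steps = (δ, T.start) :: T.steps}

theorem compSet_nilRuns_left (V : Set (Run n S)) : compSet nilRuns V = V := by
  ext R
  constructor
  · rintro ⟨T, hT, U, hU, hUT, hRT, hR⟩
    have hT' : T.steps = [] := hT
    convert hU
    refine Run.ext ?_ ?_
    · rw [hRT, hUT, T.conf_len, hT', endConf_nil]
    · rw [hR, hT', List.nil_append]
  · intro hR
    exact ⟨⟨R.start, R.startPds, [], trivial⟩, rfl, R, hR, by simp [Run.conf_len], rfl, rfl⟩

theorem compSet_stepThen_left (δ : Trans Γ Q A) (W V : Set (Run n S)) :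
    compSet (stepThen δ W) V = stepThen δ (compSet W V) := by
  ext R
  constructor
  · rintro ⟨T, ⟨T', hT', hT⟩, U, hU, hUT, -, hR⟩
    have hUT' : U.start = T'.conf T'.len := by
      rw [hUT, T.conf_len, T'.conf_len, hT, endConf_cons]
    exact ⟨T'.append U hUT', T'.append_mem_compSet hT' hU hUT', by rw [hR, hT]; rfl⟩
  · rintro ⟨W', ⟨T, hT, U, hU, hUT, hW's, hW'⟩, hR⟩
    obtain ⟨hδ, hstep⟩ := R.step_of_steps_eq_cons hR
    rw [hW's] at hstep
    refine ⟨⟨R.start, R.startPds, (δ, T.start) :: T.steps, hδ, hstep, T.ok⟩,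
      ⟨T, hT, rfl⟩, U, hU, ?_, rfl, ?_⟩
    · rw [hUT, Run.conf_len, Run.conf_len]
      exact (endConf_cons _ _ _ _).symm
    · rw [hR, hW's, hW']
      rfl

theorem compSet_assoc (U V W : Set (Run n S)) :
    compSet (compSet U V) W = compSet U (compSet V W) := by
  ext R
  constructor
  · rintro ⟨T, ⟨T₁, hT₁, T₂, hT₂, hT₂s, hTs, hT⟩, T₃, hT₃, hT₃s, hRs, hR⟩
    have hT₃s' : T₃.start = T₂.conf T₂.len := by
      rw [hT₃s, T.conf_len, T₂.conf_len, hT, endConf_append, hTs, ← T₁.conf_len, hT₂s]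
    exact ⟨T₁, hT₁, T₂.append T₃ hT₃s', T₂.append_mem_compSet hT₂ hT₃ hT₃s',
      hT₂s, hRs.trans hTs, by rw [hR, hT, List.append_assoc]; rfl⟩
  · rintro ⟨T₁, hT₁, T, ⟨T₂, hT₂, T₃, hT₃, hT₃s, hTs, hT⟩, hT₂s, hRs, hR⟩
    have hT₂s' : T₂.start = T₁.conf T₁.len := hTs ▸ hT₂s
    have hT₃s' : T₃.start = (T₁.append T₂ hT₂s').conf (T₁.append T₂ hT₂s').len := by
      rw [hT₃s, Run.conf_len, Run.conf_len, Run.append, endConf_append, ← T₁.conf_len,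
        hT₂s']
    exact ⟨T₁.append T₂ hT₂s', T₁.append_mem_compSet hT₁ hT₂ hT₂s', T₃, hT₃, hT₃s',
      hRs, by rw [hR, hT]; exact (List.append_assoc _ _ _).symm⟩

theorem compSet_iUnion_left {ι : Sort*} (W : ι → Set (Run n S)) (V : Set (Run n S)) :
    compSet (⋃ k, W k) V = ⋃ k, compSet (W k) V := by
  ext R
  simp only [compSet, Set.mem_iUnion, Set.mem_ofPred_eq]
  exact ⟨fun ⟨T, ⟨k, hT⟩, h⟩ => ⟨k, T, hT, h⟩, fun ⟨k, T, hT, h⟩ => ⟨T, ⟨k, hT⟩, h⟩⟩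

end Runs

section Grammars

variable {n : ℕ} {S : CPS Γ Q A n} {I J : Type}

def Rule.body (Xs : I → Set (Run n S)) : Rule I Γ Q A → Set (Run n S)
  | .nil _ => nilRuns
  | .one _ δ => stepThen δ nilRuns
  | .two _ δ Y => stepThen δ (Xs Y)
  | .three _ δ Y Z => stepThen δ (compSet (Xs Y) (Xs Z))

theorem describedBy_iff_mem_body {Xs : I → Set (Run n S)} {R : Run n S} {r : Rule I Γ Q A} :
    DescribedBy Xs R r ↔ R ∈ r.body Xs := by
  cases r with
  | nil => rfl
  | one X δ =>
    constructor
    · rintro ⟨d, hR⟩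
      have hd : IsPds n S.bot d.2 := R.startPds.applyOp (R.step_of_steps_eq_cons hR).2.2.2.2
      exact ⟨⟨d, hd, [], trivial⟩, rfl, hR⟩
    · rintro ⟨T, hT, hR⟩
      exact ⟨T.start, by rw [hR, show T.steps = [] from hT]⟩
  | two => rfl
  | three X δ Y Z =>
    constructor
    · rintro ⟨T, hT, U, hU, hUT, hR⟩
      exact ⟨T.append U hUT, T.append_mem_compSet hT hU hUT, hR⟩
    · rintro ⟨W, ⟨T, hT, U, hU, hUT, hWs, hW⟩, hR⟩
      exact ⟨T, hT, U, hU, hUT, by rw [hR, hWs, hW]⟩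

def derivedRuns (rules : Set (Rule I Γ Q A)) (Xs : I → Set (Run n S)) (i : I) :
    Set (Run n S) :=
  {R | ∃ r ∈ rules, r.lhs = i ∧ DescribedBy Xs R r}

theorem Describes.derivedRuns_eq {rules : Set (Rule I Γ Q A)} {Xs : I → Set (Run n S)}
    {lev : I → ℕ} (h : Describes n S rules Xs lev) (i : I) : derivedRuns rules Xs i = Xs i :=
  Set.ext fun R => (h.2 i R).symm

theorem describes_of_derivedRuns_eq {rules : Set (Rule I Γ Q A)} {Xs : I → Set (Run n S)}
    {lev : I → ℕ} (hwf : ∀ r ∈ rules, WfRule n S Xs lev r)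
    (h : ∀ i, derivedRuns rules Xs i = Xs i) : Describes n S rules Xs lev :=
  ⟨hwf, fun i R => (Set.ext_iff.mp (h i) R).symm⟩

theorem Describes.eq_biUnion_body {rules : Set (Rule I Γ Q A)} {Xs : I → Set (Run n S)}
    {lev : I → ℕ} (h : Describes n S rules Xs lev) (i : I) :
    Xs i = ⋃ r ∈ {r ∈ rules | r.lhs = i}, r.body Xs := by
  ext R
  simp [← h.derivedRuns_eq i, derivedRuns, describedBy_iff_mem_body, and_assoc]

theorem derivedRuns_union (rules₁ rules₂ : Set (Rule I Γ Q A)) (Xs : I → Set (Run n S))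
    (i : I) :
    derivedRuns (rules₁ ∪ rules₂) Xs i = derivedRuns rules₁ Xs i ∪ derivedRuns rules₂ Xs i := by
  ext R
  simp only [derivedRuns, Set.mem_union, Set.mem_ofPred_eq, or_and_right, exists_or]

theorem opOK_mono {op : Op Γ} {l l' : ℕ} (h : opOK op l) (hl : l ≤ l') : opOK op l' :=
  fun k hk => (h k hk).trans hl

def Rule.relabel (f : I → J) (j : J) : Rule I Γ Q A → Rule J Γ Q A
  | .nil _ => .nil j
  | .one _ δ => .one j δ
  | .two _ δ Y => .two j δ (f Y)
  | .three _ δ Y Z => .three j δ (f Y) (f Z)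

@[simp]
theorem Rule.lhs_relabel (f : I → J) (j : J) (r : Rule I Γ Q A) : (r.relabel f j).lhs = j := by
  cases r <;> rfl

theorem describedBy_relabel {Xs : I → Set (Run n S)} {Xs' : J → Set (Run n S)} {f : I → J}
    (hf : ∀ i, Xs' (f i) = Xs i) (j : J) (r : Rule I Γ Q A) (R : Run n S) :
    DescribedBy Xs' R (r.relabel f j) ↔ DescribedBy Xs R r := by
  cases r <;> simp [DescribedBy, Rule.relabel, hf]

theorem WfRule.relabel {Xs : I → Set (Run n S)} {Xs' : J → Set (Run n S)} {lev : I → ℕ}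
    {lev' : J → ℕ} {f : I → J} (hf : ∀ i, Xs' (f i) = Xs i) (hl : ∀ i, lev' (f i) = lev i)
    {j : J} {r : Rule I Γ Q A} (hj : lev r.lhs ≤ lev' j) (h : WfRule n S Xs lev r) :
    WfRule n S Xs' lev' (r.relabel f j) := by
  cases r with
  | nil => trivial
  | one X δ => exact ⟨h.1, opOK_mono h.2 hj⟩
  | two X δ Y => exact ⟨h.1, hl Y ▸ h.2.1.trans hj, hl Y ▸ h.2.2⟩
  | three X δ Y Z =>
    refine ⟨h.1, hl Z ▸ h.2.1.trans hj, hl Y ▸ h.2.2.1, fun R hR => ?_⟩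
    rw [hl Y]
    exact h.2.2.2 R (hf Y ▸ hR)

def copyRules (rules : Set (Rule I Γ Q A)) (f : I → J) (C : I → J → Prop) :
    Set (Rule J Γ Q A) :=
  {r' | ∃ r ∈ rules, ∃ j, C r.lhs j ∧ r' = r.relabel f j}

section Copy

variable {rules : Set (Rule I Γ Q A)} {Xs : I → Set (Run n S)} {lev : I → ℕ}
  {Xs' : J → Set (Run n S)} {lev' : J → ℕ} {f : I → J} {C : I → J → Prop}

theorem wfRule_of_mem_copyRules (hwf : ∀ r ∈ rules, WfRule n S Xs lev r)
    (hf : ∀ i, Xs' (f i) = Xs i) (hl : ∀ i, lev' (f i) = lev i)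
    (hC : ∀ i j, C i j → lev i ≤ lev' j) {r' : Rule J Γ Q A}
    (hr' : r' ∈ copyRules rules f C) :
    WfRule n S Xs' lev' r' := by
  obtain ⟨r, hr, j, hj, rfl⟩ := hr'
  exact (hwf r hr).relabel hf hl (hC _ _ hj)

theorem mem_derivedRuns_copyRules (hdesc : Describes n S rules Xs lev)
    (hf : ∀ i, Xs' (f i) = Xs i) (j : J) (R : Run n S) :
    R ∈ derivedRuns (copyRules rules f C) Xs' j ↔ ∃ i, C i j ∧ R ∈ Xs i := by
  simp only [derivedRuns, copyRules, Set.mem_ofPred_eq, ← hdesc.derivedRuns_eq]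
  constructor
  · rintro ⟨_, ⟨r, hr, j', hj', rfl⟩, rfl, hR⟩
    exact ⟨r.lhs, by simpa using hj', r, hr, rfl, (describedBy_relabel hf _ r R).mp hR⟩
  · rintro ⟨_, hj, r, hr, rfl, hR⟩
    exact ⟨_, ⟨r, hr, j, hj, rfl⟩, r.lhs_relabel f j, (describedBy_relabel hf j r R).mpr hR⟩

end Copy

def unionCopy (X Y : I) : I → I ⊕ Unit → Prop
  | i, .inl i' => i = i'
  | i, .inr _ => i = X ∨ i = Y

theorem describes_union {rules : Set (Rule I Γ Q A)} {Xs : I → Set (Run n S)} {lev : I → ℕ}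
    (hdesc : Describes n S rules Xs lev) (X Y : I) :
    Describes n S (copyRules rules Sum.inl (unionCopy X Y))
      (Sum.elim Xs fun _ => Xs X ∪ Xs Y) (Sum.elim lev fun _ => max (lev X) (lev Y)) := by
  refine describes_of_derivedRuns_eq (fun r' => wfRule_of_mem_copyRules (f := Sum.inl) hdesc.1
    (fun _ => rfl) (fun _ => rfl) ?_) fun j => Set.ext fun R => ?_
  · rintro i (i' | _) hC
    · exact (hC : i = i') ▸ le_rfl
    · rcases (hC : i = X ∨ i = Y) with rfl | rfl <;> simp
  · rw [mem_derivedRuns_copyRules (Xs' := Sum.elim Xs fun _ => Xs X ∪ Xs Y) hdesc fun _ => rfl]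
    cases j <;> simp [unionCopy]

/-- A copy `suffix i` of `V` per `i`, at the level of `comp i`, keeps `comp i → δ (suffix i)`
well-formed when `δ` pops or collapses above the level of `V`. -/
inductive CompSym (I : Type) where
  | base (i : I)
  | comp (i : I)
  | suffix (i : I)

instance [Finite I] : Finite (CompSym I) :=
  Finite.of_surjective (Sum.elim CompSym.base (Sum.elim CompSym.comp CompSym.suffix)) <| by
    rintro (i | i | i)
    exacts [⟨.inl i, rfl⟩, ⟨.inr (.inl i), rfl⟩, ⟨.inr (.inr i), rfl⟩]

def compFamily (Xs : I → Set (Run n S)) (V : Set (Run n S)) : CompSym I → Set (Run n S)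
  | .base i => Xs i
  | .comp i => compSet (Xs i) V
  | .suffix _ => V

def compLev (lev : I → ℕ) (m : ℕ) : CompSym I → ℕ
  | .base i => lev i
  | .comp i => max (lev i) m
  | .suffix i => max (lev i) m

theorem compLev_le {lev : I → ℕ} {m N : ℕ} (hlev : ∀ i, lev i ≤ N) (hm : m ≤ N) :
    ∀ j, compLev lev m j ≤ N
  | .base i => hlev i
  | .comp i => max_le (hlev i) hm
  | .suffix i => max_le (hlev i) hm

def Rule.composeStep : Rule I Γ Q A → Option (Rule (CompSym I) Γ Q A)
  | .nil _ => none
  | .one i δ => some (.two (.comp i) δ (.suffix i))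
  | .two i δ Y => some (.two (.comp i) δ (.comp Y))
  | .three i δ Y Z => some (.three (.comp i) δ (.base Y) (.comp Z))

theorem Rule.composeStep_eq_none {r : Rule I Γ Q A} : r.composeStep = none ↔ r = .nil r.lhs := by
  cases r <;> simp [Rule.composeStep, Rule.lhs]

theorem Rule.lhs_of_composeStep_eq_some {r : Rule I Γ Q A} {r' : Rule (CompSym I) Γ Q A}
    (h : r.composeStep = some r') : r'.lhs = .comp r.lhs := by
  cases r <;> cases h <;> rfl

theorem Rule.compSet_body (Xs : I → Set (Run n S)) (V : Set (Run n S)) (r : Rule I Γ Q A) :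
    compSet (r.body Xs) V = r.composeStep.elim V (·.body (compFamily Xs V)) := by
  cases r <;>
    simp only [Rule.body, Rule.composeStep, Option.elim, compFamily, compSet_nilRuns_left,
      compSet_stepThen_left, compSet_assoc]

theorem mem_compSet_iff_exists_rule {rules : Set (Rule I Γ Q A)} {Xs : I → Set (Run n S)}
    {lev : I → ℕ} (hdesc : Describes n S rules Xs lev) (V : Set (Run n S)) (i : I)
    (R : Run n S) :
    R ∈ compSet (Xs i) V ↔
      ∃ r ∈ rules, r.lhs = i ∧ R ∈ r.composeStep.elim V (·.body (compFamily Xs V)) := by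
  simp only [hdesc.eq_biUnion_body i, compSet_iUnion_left, Rule.compSet_body, Set.mem_iUnion,
    Set.mem_ofPred_eq, exists_prop, and_assoc]

theorem WfRule.composeStep {Xs : I → Set (Run n S)} {lev : I → ℕ} {Y : I} {r : Rule I Γ Q A}
    {r' : Rule (CompSym I) Γ Q A} (hwf : WfRule n S Xs lev r) (h : r.composeStep = some r') :
    WfRule n S (compFamily Xs (Xs Y)) (compLev lev (lev Y)) r' := by
  cases r with
  | nil => cases h
  | one i δ =>
    cases h
    exact ⟨hwf.1, le_rfl, opOK_mono hwf.2 (le_max_left _ _)⟩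
  | two i δ i' =>
    cases h
    exact ⟨hwf.1, max_le_max hwf.2.1 le_rfl, opOK_mono hwf.2.2 (le_max_left _ _)⟩
  | three i δ i' i'' =>
    cases h
    exact ⟨hwf.1, max_le_max hwf.2.1 le_rfl, hwf.2.2.1, hwf.2.2.2⟩

def compCopy (rules : Set (Rule I Γ Q A)) (Y : I) : I → CompSym I → Prop
  | i, .base i' => i = i'
  | i, .comp i' => i = Y ∧ Rule.nil i' ∈ rules
  | i, .suffix _ => i = Y

def compRules (rules : Set (Rule I Γ Q A)) (Y : I) : Set (Rule (CompSym I) Γ Q A) :=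
  copyRules rules .base (compCopy rules Y) ∪ {r' | ∃ r ∈ rules, r.composeStep = some r'}

theorem mem_derivedRuns_compRules {rules : Set (Rule I Γ Q A)} {Xs : I → Set (Run n S)}
    {lev : I → ℕ} (hdesc : Describes n S rules Xs lev) (Y : I) (j : CompSym I) (R : Run n S) :
    R ∈ derivedRuns (compRules rules Y) (compFamily Xs (Xs Y)) j ↔
      (∃ i, compCopy rules Y i j ∧ R ∈ Xs i) ∨
      ∃ r ∈ rules, .comp r.lhs = j ∧
        ∃ r', r.composeStep = some r' ∧ R ∈ r'.body (compFamily Xs (Xs Y)) := by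
  rw [compRules, derivedRuns_union, Set.mem_union,
    mem_derivedRuns_copyRules (Xs' := compFamily Xs (Xs Y)) hdesc fun _ => rfl]
  refine or_congr Iff.rfl ?_
  simp only [derivedRuns, describedBy_iff_mem_body, Set.mem_ofPred_eq]
  constructor
  · rintro ⟨r', ⟨r, hr, h⟩, rfl, hR⟩
    exact ⟨r, hr, (Rule.lhs_of_composeStep_eq_some h).symm, r', h, hR⟩
  · rintro ⟨r, hr, rfl, r', h, hR⟩
    exact ⟨r', ⟨r, hr, h⟩, Rule.lhs_of_composeStep_eq_some h, hR⟩

theorem describes_comp {rules : Set (Rule I Γ Q A)} {Xs : I → Set (Run n S)} {lev : I → ℕ}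
    (hdesc : Describes n S rules Xs lev) (Y : I) :
    Describes n S (compRules rules Y) (compFamily Xs (Xs Y)) (compLev lev (lev Y)) := by
  refine describes_of_derivedRuns_eq ?_ fun j => Set.ext fun R => ?_
  · rintro r' (hr' | ⟨r, hr, h⟩)
    · refine wfRule_of_mem_copyRules (f := CompSym.base) hdesc.1 (fun _ => rfl) (fun _ => rfl)
        ?_ hr'
      rintro i (i' | i' | i') hC
      · exact (hC : i = i') ▸ le_rfl
      · exact (hC.1 : i = Y) ▸ le_max_right _ _
      · exact (hC : i = Y) ▸ le_max_right _ _
    · exact (hdesc.1 r hr).composeStep h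
  rw [mem_derivedRuns_compRules hdesc]
  cases j with
  | base i => simp [compCopy, compFamily]
  | suffix i => simp [compCopy, compFamily]
  | comp i =>
    simp only [compFamily, mem_compSet_iff_exists_rule hdesc, compCopy, CompSym.comp.injEq,
      and_assoc, exists_eq_left]
    constructor
    · rintro (⟨hnil, hR⟩ | ⟨r, hr, hl, r', h, hR⟩)
      · exact ⟨.nil i, hnil, rfl, hR⟩
      · exact ⟨r, hr, hl, by rwa [h]⟩
    · rintro ⟨r, hr, rfl, hR⟩
      cases h : r.composeStep with
      | none =>
        rw [Rule.composeStep_eq_none.mp h] at hr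
        exact Or.inl ⟨hr, by rwa [h] at hR⟩
      | some r' => exact Or.inr ⟨r, hr, rfl, r', h, by rwa [h] at hR⟩

end Grammars

theorem closure_union_comp_general {Γ Q A I : Type} [Finite I]
    (n : ℕ) (S : CPS Γ Q A n)
    (Xs : I → Set (Run n S)) (lev : I → ℕ) (hlev : ∀ i, lev i ≤ n)
    (rules : Set (Rule I Γ Q A)) (hdesc : Describes n S rules Xs lev)
    (X Y : I) :
    (∃ rules' : Set (Rule (I ⊕ Unit) Γ Q A),
      Describes n S rules' (Sum.elim Xs fun _ => Xs X ∪ Xs Y)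
        (Sum.elim lev fun _ => max (lev X) (lev Y))) ∧
    (∃ (J : Type) (_ : Finite J) (Xs' : J → Set (Run n S)) (lev' : J → ℕ)
        (rules' : Set (Rule J Γ Q A)) (j0 : J),
      (∀ i : I, ∃ j : J, Xs' j = Xs i ∧ lev' j = lev i) ∧
      Xs' j0 = compSet (Xs X) (Xs Y) ∧
      lev' j0 = max (lev X) (lev Y) ∧
      (∀ j, lev' j ≤ n) ∧
      Describes n S rules' Xs' lev') :=
  ⟨⟨_, describes_union hdesc X Y⟩,
    ⟨CompSym I, inferInstance, compFamily Xs (Xs Y), compLev lev (lev Y), compRules rules Y,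
      .comp X, fun i => ⟨.base i, rfl, rfl⟩, rfl, rfl, compLev_le hlev (hlev Y),
      describes_comp hdesc Y⟩⟩

/-- **Lemma (closure under union and composition).** The class of families described by
well-formed grammars is closed under adding unions and compositions, with
`lev(X ∪ Y) = lev(X∘Y) = max(lev X, lev Y)`. -/
theorem closure_union_comp {Γ Q A I : Type} [Fintype Γ] [Fintype Q] [Fintype A] [Finite I]
    (n : ℕ) (hn : 1 ≤ n) (S : CPS Γ Q A n)
    (Xs : I → Set (Run n S)) (lev : I → ℕ) (hlev : ∀ i, lev i ≤ n)
    (rules : Set (Rule I Γ Q A)) (hdesc : Describes n S rules Xs lev)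
    (X Y : I) :
    (∃ rules' : Set (Rule (I ⊕ Unit) Γ Q A),
      Describes n S rules' (Sum.elim Xs fun _ => Xs X ∪ Xs Y)
        (Sum.elim lev fun _ => max (lev X) (lev Y))) ∧
    (∃ (J : Type) (_ : Finite J) (Xs' : J → Set (Run n S)) (lev' : J → ℕ)
        (rules' : Set (Rule J Γ Q A)) (j0 : J),
      (∀ i : I, ∃ j : J, Xs' j = Xs i ∧ lev' j = lev i) ∧
      Xs' j0 = compSet (Xs X) (Xs Y) ∧
      lev' j0 = max (lev X) (lev Y) ∧
      (∀ j, lev' j ≤ n) ∧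
      Describes n S rules' Xs' lev') :=
  closure_union_comp_general n S Xs lev hlev rules hdesc X Y

end CPDS
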